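/- Let α > 1 and C₀ > 0. There exists K₀ = K₀(α, C₀) such that the following holds for all K ≥ K₀ and 0 < δ ≤ 1/K. Let m ∈ [1/2, 2], λ₀ ∈ (0,1), set ξ^τ = (0, m) ∈ ℝ², and define for η ∈ Ω = [−1/2,1/2]²: Φ(η) = (α/2) m^{α−2} ( η₁² + (α−1) η₂² ) + δ Θ(η) |η|³, where Θ(η) = (α(α−2)/6) |ξ^τ + δλ₀η|^{α−3} ( 3⟨u, v⟩ + (α−4)⟨u, v⟩³ ) with u = (ξ^τ + δλ₀η)/|ξ^τ + δλ₀η|, v = η/|η| (and Θ(η)|η|³ := 0 at η = 0). Let Σ(η) = (η₁, η₂, Φ(η)) and X(η) = ∂_{η₁}Σ(η) × ∂_{η₂}Σ(η) (cross product in ℝ³). If η^{(1)}, η^{(2)}, η^{(3)} ∈ Ω are such that the determinant of the 3×3 matrix with rows (1,1,1), (η^{(1)}₁, η^{(2)}₁, η^{(3)}₁), (η^{(1)}₂, η^{(2)}₂, η^{(3)}₂) has absolute value ≥ C₀, then |det( X(η^{(1)}), X(η^{(2)}), X(η^{(3)}) )| ≥ (1/2) α² (α−1) m^{2(α−2)}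 C₀. -/

import Mathlib

noncomputable section

open MeasureTheory Real
open scoped ENNReal Classical

abbrev E2 : Type := EuclideanSpace ℝ (Fin 2)

def vec2 (a b : ℝ) : E2 := (EuclideanSpace.equiv (Fin 2) ℝ).symm ![a, b]

/-- The unit square `Ω = [−1/2,1/2]²`. -/
def Om : Set E2 := {η : E2 | |η 0| ≤ 1 / 2 ∧ |η 1| ≤ 1 / 2}

/-- The inner product `⟨u, v⟩` of the unit vectors `u, v` in the directions of
`ξ^τ + δl₀η` and `η`, where `ξ^τ = (0, m)`. -/
def ipUV (m δ l₀ : ℝ) (η : E2) : ℝ :=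
  (inner ℝ (vec2 0 m + (δ * l₀) • η) η : ℝ) / (‖vec2 0 m + (δ * l₀) • η‖ * ‖η‖)

/-- The third-order Taylor coefficient `Θ(η)`. -/
def Theta (α m δ l₀ : ℝ) (η : E2) : ℝ :=
  α * (α - 2) / 6 * ‖vec2 0 m + (δ * l₀) • η‖ ^ (α - 3) *
    (3 * ipUV m δ l₀ η + (α - 4) * ipUV m δ l₀ η ^ 3)

/-- The rescaled phase `Φ(η) = (α/2) m^{α−2}(η₁² + (α−1)η₂²) + δ Θ(η)|η|³`
(with `Θ(η)|η|³ := 0` at `η = 0`). -/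
def Phi (α m δ l₀ : ℝ) (η : E2) : ℝ :=
  α / 2 * m ^ (α - 2) * (η 0 ^ 2 + (α - 1) * η 1 ^ 2) +
    δ * (if η = 0 then 0 else Theta α m δ l₀ η * ‖η‖ ^ 3)

/-- The graph parametrisation `Σ(η) = (η₁, η₂, Φ(η))`. -/
def Sig (α m δ l₀ : ℝ) (η : E2) : Fin 3 → ℝ := ![η 0, η 1, Phi α m δ l₀ η]

/-- `X(η) = ∂_{η₁}Σ(η) × ∂_{η₂}Σ(η)`. -/
def Xvec (α m δ l₀ : ℝ) (η : E2) : Fin 3 → ℝ :=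
  crossProduct (fderiv ℝ (Sig α m δ l₀) η (EuclideanSpace.single 0 1))
    (fderiv ℝ (Sig α m δ l₀) η (EuclideanSpace.single 1 1))

/-!
Expanding `Θ(η)|η|³` gives `Φ(η) = Q(η) + δ g(ξ^τ + δλ₀η, η)`, with `Q` the quadratic part and
`g(w, η)` (`cubicRemainder`) smooth away from `w = 0`. Since `X = (-∂₁Φ, -∂₂Φ, 1)`, the determinant
of the normals is the determinant with rows `1`, `∂₁Φ(η⁽ʲ⁾)`, `∂₂Φ(η⁽ʲ⁾)`, bilinear in the last two
rows. As `∇Q(η) = (a η₁, b η₂)` with `a b = α²(α-1) m^{2(α-2)}`, the main term is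
`a b det(1; η₁; η₂)`. The gradient of `δ g` is `O(δ)` uniformly, because `∇g` is continuous on a
compact set avoiding `w = 0`; so for small `δ` the error is at most half of the main term.
-/

theorem crossProduct_fderiv_graph {f : E2 → ℝ} {L : E2 →L[ℝ] ℝ} {η : E2}
    (hf : HasFDerivAt f L η) :
    crossProduct (fderiv ℝ (fun x : E2 => ![x 0, x 1, f x]) η (EuclideanSpace.single 0 1))
        (fderiv ℝ (fun x : E2 => ![x 0, x 1, f x]) η (EuclideanSpace.single 1 1)) =
      ![-L (EuclideanSpace.single 0 1), -L (EuclideanSpace.single 1 1), 1] := by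
  have hgraph : HasFDerivAt (fun x : E2 => ![x 0, x 1, f x])
      (ContinuousLinearMap.pi ![EuclideanSpace.proj 0, EuclideanSpace.proj 1, L]) η := by
    refine hasFDerivAt_pi'' fun i => ?_
    fin_cases i
    · exact (EuclideanSpace.proj (0 : Fin 2) : E2 →L[ℝ] ℝ).hasFDerivAt
    · exact (EuclideanSpace.proj (1 : Fin 2) : E2 →L[ℝ] ℝ).hasFDerivAt
    · exact hf
  rw [hgraph.fderiv]
  ext i
  fin_cases i <;> simp [cross_apply]

theorem det_of_one_row (u v : Fin 3 → ℝ) :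
    (Matrix.of ![1, u, v]).det = (u 1 - u 0) * (v 2 - v 0) - (u 2 - u 0) * (v 1 - v 0) := by
  simp only [Matrix.det_fin_three, Matrix.of_apply, Matrix.cons_val', Pi.one_apply,
    Matrix.cons_val_fin_one, Matrix.cons_val_zero, Matrix.cons_val_one, one_mul, Matrix.cons_val]
  ring

theorem abs_det_of_one_row_le (u v : Fin 3 → ℝ) :
    |(Matrix.of ![1, u, v]).det| ≤ 8 * (‖u‖ * ‖v‖) := by
  have hdiff : ∀ (w : Fin 3 → ℝ) (i j : Fin 3), |w i - w j| ≤ 2 * ‖w‖ := fun w i j => by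
    have hi := norm_le_pi_norm w i
    have hj := norm_le_pi_norm w j
    rw [Real.norm_eq_abs] at hi hj
    linarith [abs_sub (w i) (w j)]
  have hprod : ∀ i j k l, |(u i - u j) * (v k - v l)| ≤ 2 * ‖u‖ * (2 * ‖v‖) := fun i j k l => by
    rw [abs_mul]
    exact mul_le_mul (hdiff u i j) (hdiff v k l) (abs_nonneg _) (by positivity)
  rw [det_of_one_row]
  refine (abs_sub _ _).trans ?_
  linarith [hprod 1 0 2 0, hprod 2 0 1 0]

theorem abs_det_of_one_row_add_smul_ge {a b δ M : ℝ} (ha : 0 ≤ a) (hb : 0 ≤ b) (hδ : 0 ≤ δ)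
    (hδ₁ : δ ≤ 1) {x y r s : Fin 3 → ℝ} (hx : ‖x‖ ≤ 1) (hy : ‖y‖ ≤ 1) (hr : ‖r‖ ≤ M)
    (hs : ‖s‖ ≤ M) :
    a * b * |(Matrix.of ![1, x, y]).det| - δ * (8 * M * (a + b + M)) ≤
      |(Matrix.of ![1, a • x + δ • r, b • y + δ • s]).det| := by
  have hM : 0 ≤ M := (norm_nonneg r).trans hr
  set err := a * (Matrix.of ![1, x, s]).det + (Matrix.of ![1, r, b • y + δ • s]).det
  have hexpand : (Matrix.of ![1, a • x + δ • r, b • y + δ • s]).det =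
      a * b * (Matrix.of ![1, x, y]).det + δ * err := by
    simp only [err, det_of_one_row, Pi.add_apply, Pi.smul_apply, smul_eq_mul]
    ring
  have hq : ‖b • y + δ • s‖ ≤ b + M := calc
    ‖b • y + δ • s‖ ≤ b * ‖y‖ + δ * ‖s‖ := by
      refine (norm_add_le _ _).trans_eq ?_
      rw [norm_smul, norm_smul, Real.norm_of_nonneg hb, Real.norm_of_nonneg hδ]
    _ ≤ b * 1 + 1 * M := by gcongr
    _ = b + M := by ring
  have hxs : |(Matrix.of ![1, x, s]).det| ≤ 8 * M := by
    refine (abs_det_of_one_row_le x s).trans ?_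
    nlinarith [norm_nonneg x, norm_nonneg s]
  have hrq : |(Matrix.of ![1, r, b • y + δ • s]).det| ≤ 8 * (M * (b + M)) :=
    (abs_det_of_one_row_le _ _).trans (by gcongr)
  have herr : |err| ≤ 8 * M * (a + b + M) := by
    refine (abs_add_le _ _).trans ?_
    rw [abs_mul, abs_of_nonneg ha]
    nlinarith
  have hmain : |a * b * (Matrix.of ![1, x, y]).det| = a * b * |(Matrix.of ![1, x, y]).det| := by
    rw [abs_mul, abs_of_nonneg (mul_nonneg ha hb)]
  have hsmall : |δ * err| ≤ δ * (8 * M * (a + b + M)) := by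
    rw [abs_mul, abs_of_nonneg hδ]
    exact mul_le_mul_of_nonneg_left herr hδ
  rw [hexpand]
  linarith [abs_sub_abs_le_abs_add (a * b * (Matrix.of ![1, x, y]).det) (δ * err)]

theorem abs_apply_smul_single_le {D : E2 × E2 →L[ℝ] ℝ} {M s : ℝ} (hD : ‖D‖ ≤ M) (hs : |s| ≤ 1)
    (i : Fin 2) : |D (s • EuclideanSpace.single i 1, EuclideanSpace.single i 1)| ≤ M := by
  have hv : ‖(s • EuclideanSpace.single i (1 : ℝ), (EuclideanSpace.single i 1 : E2))‖ ≤ 1 := by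
    simp [Prod.norm_def, norm_smul, hs]
  calc |D _| ≤ ‖D‖ * ‖(s • EuclideanSpace.single i (1 : ℝ), (EuclideanSpace.single i 1 : E2))‖ :=
        D.le_opNorm _
    _ ≤ M * 1 := mul_le_mul hD hv (norm_nonneg _) ((norm_nonneg D).trans hD)
    _ = M := mul_one M

theorem rpow_le_two_rpow_abs {m : ℝ} (hm : m ∈ Set.Icc (1 / 2 : ℝ) 2) (t : ℝ) :
    m ^ t ≤ 2 ^ |t| := by
  have hm0 : 0 < m := by linarith [hm.1]
  rcases le_total 0 t with ht | ht
  · rw [abs_of_nonneg ht]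
    exact Real.rpow_le_rpow hm0.le hm.2 ht
  · calc m ^ t ≤ (1 / 2) ^ t := Real.rpow_le_rpow_of_nonpos (by norm_num) hm.1 ht
      _ = 2 ^ |t| := by
        rw [abs_of_nonpos ht, one_div, Real.inv_rpow zero_le_two, Real.rpow_neg zero_le_two]

theorem inv_two_rpow_abs_le_rpow {m : ℝ} (hm : m ∈ Set.Icc (1 / 2 : ℝ) 2) (t : ℝ) :
    (2 ^ |t|)⁻¹ ≤ m ^ t := by
  have hm0 : 0 < m := by linarith [hm.1]
  rw [← abs_neg, ← inv_inv (m ^ t), ← Real.rpow_neg hm0.le]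
  exact inv_anti₀ (Real.rpow_pos_of_pos hm0 _) (rpow_le_two_rpow_abs hm (-t))

theorem norm_vec2 (a b : ℝ) : ‖vec2 a b‖ = √(a ^ 2 + b ^ 2) := by
  simp [vec2, EuclideanSpace.norm_eq, Fin.sum_univ_two]

theorem norm_le_one_of_mem_Om {η : E2} (hη : η ∈ Om) : ‖η‖ ≤ 1 := by
  have h0 : η 0 ^ 2 ≤ 1 / 4 := by nlinarith [sq_abs (η 0), abs_nonneg (η 0), hη.1]
  have h1 : η 1 ^ 2 ≤ 1 / 4 := by nlinarith [sq_abs (η 1), abs_nonneg (η 1), hη.2]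
  rw [EuclideanSpace.norm_eq, Real.sqrt_le_one]
  simp only [Fin.sum_univ_two, Real.norm_eq_abs, sq_abs]
  linarith

theorem abs_apply_le_one_of_mem_Om {η : E2} (hη : η ∈ Om) (i : Fin 2) : |η i| ≤ 1 := by
  revert i
  rw [Fin.forall_fin_two]
  exact ⟨by linarith [hη.1], by linarith [hη.2]⟩

theorem norm_vec2_add_smul_mem_Icc {m s : ℝ} {η : E2} (hm : m ∈ Set.Icc (1 / 2 : ℝ) 2)
    (hs : |s| ≤ 1 / 4) (hη : η ∈ Om) :
    ‖vec2 0 m + s • η‖ ∈ Set.Icc (1 / 4 : ℝ) 3 := by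
  have hξ : ‖vec2 0 m‖ = m := by
    rw [norm_vec2, zero_pow two_ne_zero, zero_add, Real.sqrt_sq (by linarith [hm.1])]
  have hsη : ‖s • η‖ ≤ 1 / 4 := by
    rw [norm_smul, Real.norm_eq_abs]
    nlinarith [norm_le_one_of_mem_Om hη, norm_nonneg η, abs_nonneg s]
  have hlow := norm_sub_le (vec2 0 m + s • η) (s • η)
  rw [add_sub_cancel_right, hξ] at hlow
  have hup := norm_add_le (vec2 0 m) (s • η)
  rw [hξ] at hup
  constructor <;> linarith [hm.1, hm.2]

/-- `Θ(η)|η|³` as a function of `w = ξ^τ + δλ₀η` and `η`; unlike `Θ` it is smooth at `η = 0`. -/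
def cubicRemainder (α : ℝ) (p : E2 × E2) : ℝ :=
  α * (α - 2) / 2 * ‖p.1‖ ^ (α - 4) * inner ℝ p.1 p.2 * ‖p.2‖ ^ 2 +
    α * (α - 2) * (α - 4) / 6 * ‖p.1‖ ^ (α - 6) * inner ℝ p.1 p.2 ^ 3

theorem contDiffAt_cubicRemainder (α : ℝ) {n : WithTop ℕ∞} {p : E2 × E2} (hp : p.1 ≠ 0) :
    ContDiffAt ℝ n (cubicRemainder α) p := by
  have hfst : ContDiffAt ℝ n (fun q : E2 × E2 => q.1) p := contDiffAt_fst
  have hsnd : ContDiffAt ℝ n (fun q : E2 × E2 => q.2) p := contDiffAt_snd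
  have hnorm := hfst.norm ℝ hp
  have hinner : ContDiffAt ℝ n (fun q : E2 × E2 => inner ℝ q.1 q.2) p := hfst.inner ℝ hsnd
  have hsq : ContDiffAt ℝ n (fun q : E2 × E2 => ‖q.2‖ ^ 2) p :=
    (contDiff_norm_sq ℝ).contDiffAt.comp p hsnd
  have hpos : ‖p.1‖ ≠ 0 := norm_ne_zero_iff.mpr hp
  unfold cubicRemainder
  exact (((contDiffAt_const.mul (hnorm.rpow_const_of_ne hpos)).mul hinner).mul hsq).add
    ((contDiffAt_const.mul (hnorm.rpow_const_of_ne hpos)).mul (hinner.pow 3))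

theorem exists_bound_fderiv_cubicRemainder (α : ℝ) :
    ∃ M, 0 ≤ M ∧ ∀ w η : E2, 1 / 4 ≤ ‖w‖ → ‖w‖ ≤ 3 → ‖η‖ ≤ 1 →
      ‖fderiv ℝ (cubicRemainder α) (w, η)‖ ≤ M := by
  have hopen : IsOpen {p : E2 × E2 | p.1 ≠ 0} := isOpen_ne.preimage continuous_fst
  have hcont : ContinuousOn (fderiv ℝ (cubicRemainder α)) {p : E2 × E2 | p.1 ≠ 0} :=
    ContDiffOn.continuousOn_fderiv_of_isOpen (n := 1)
      (fun p hp => (contDiffAt_cubicRemainder α hp).contDiffWithinAt) hopen le_rfl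
  have hK : IsCompact ((Metric.closedBall (0 : E2) 3 \ Metric.ball 0 (1 / 4)) ×ˢ
      Metric.closedBall (0 : E2) 1) :=
    ((isCompact_closedBall 0 3).diff Metric.isOpen_ball).prod (isCompact_closedBall 0 1)
  obtain ⟨M, hM⟩ := hK.exists_bound_of_continuousOn (hcont.mono fun p hp => by
    have : 1 / 4 ≤ ‖p.1‖ := by simpa using hp.1.2
    exact norm_ne_zero_iff.mp (by positivity))
  refine ⟨max M 0, le_max_right M 0, fun w η hw1 hw2 hη => (hM (w, η) ?_).trans (le_max_left M 0)⟩
  exact ⟨⟨by simpa using hw2, by simpa using hw1⟩, by simpa using hη⟩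

theorem Theta_mul_norm_pow_three (α m δ l₀ : ℝ) {η : E2} (hη : η ≠ 0)
    (hw : vec2 0 m + (δ * l₀) • η ≠ 0) :
    Theta α m δ l₀ η * ‖η‖ ^ 3 = cubicRemainder α (vec2 0 m + (δ * l₀) • η, η) := by
  set w := vec2 0 m + (δ * l₀) • η
  have hW : 0 < ‖w‖ := norm_pos_iff.mpr hw
  have hR : ‖η‖ ≠ 0 := norm_ne_zero_iff.mpr hη
  have h4 : ‖w‖ ^ (α - 3) = ‖w‖ ^ (α - 4) * ‖w‖ := by
    rw [← Real.rpow_add_one hW.ne']; ring_nf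
  have h6 : ‖w‖ ^ (α - 3) = ‖w‖ ^ (α - 6) * ‖w‖ ^ 3 := by
    rw [← Real.rpow_natCast, ← Real.rpow_add hW]; ring_nf
  have hip : ipUV m δ l₀ η = inner ℝ w η / (‖w‖ * ‖η‖) := rfl
  have hsplit : ‖w‖ ^ (α - 3) * (3 * ipUV m δ l₀ η) * ‖η‖ ^ 3 =
      3 * ‖w‖ ^ (α - 4) * inner ℝ w η * ‖η‖ ^ 2 := by
    rw [h4, hip]; field_simp
  have hsplit' : ‖w‖ ^ (α - 3) * ipUV m δ l₀ η ^ 3 * ‖η‖ ^ 3 =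
      ‖w‖ ^ (α - 6) * inner ℝ w η ^ 3 := by
    rw [h6, hip]; field_simp
  simp only [Theta, cubicRemainder]
  linear_combination α * (α - 2) / 6 * hsplit + α * (α - 2) * (α - 4) / 6 * hsplit'

theorem Phi_eq_add_cubicRemainder (α m δ l₀ : ℝ) {η : E2} (hw : vec2 0 m + (δ * l₀) • η ≠ 0) :
    Phi α m δ l₀ η = α / 2 * m ^ (α - 2) * (η 0 ^ 2 + (α - 1) * η 1 ^ 2) +
      δ * cubicRemainder α (vec2 0 m + (δ * l₀) • η, η) := by
  rw [Phi]
  congr 2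
  split_ifs with hη
  · simp [hη, cubicRemainder]
  · exact Theta_mul_norm_pow_three α m δ l₀ hη hw

theorem hasFDerivAt_Phi (α m δ l₀ : ℝ) {η : E2} (hw : vec2 0 m + (δ * l₀) • η ≠ 0) :
    HasFDerivAt (Phi α m δ l₀)
      ((α * m ^ (α - 2) * η 0) • EuclideanSpace.proj (0 : Fin 2) +
        (α * m ^ (α - 2) * (α - 1) * η 1) • EuclideanSpace.proj (1 : Fin 2) +
        δ • (fderiv ℝ (cubicRemainder α) (vec2 0 m + (δ * l₀) • η, η)).comp
          (((δ * l₀) • ContinuousLinearMap.id ℝ E2).prod (ContinuousLinearMap.id ℝ E2))) η := by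
  have hslice : HasFDerivAt (fun x : E2 => (vec2 0 m + (δ * l₀) • x, x))
      (((δ * l₀) • ContinuousLinearMap.id ℝ E2).prod (ContinuousLinearMap.id ℝ E2)) η :=
    (((hasFDerivAt_id η).const_smul (δ * l₀)).const_add (vec2 0 m)).prodMk (hasFDerivAt_id η)
  have hcubic := ((contDiffAt_cubicRemainder α (n := 1) hw).differentiableAt
    one_ne_zero).hasFDerivAt.comp η hslice
  have hx0 := (EuclideanSpace.proj (0 : Fin 2) : E2 →L[ℝ] ℝ).hasFDerivAt (x := η)
  have hx1 := (EuclideanSpace.proj (1 : Fin 2) : E2 →L[ℝ] ℝ).hasFDerivAt (x := η)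
  have hmodel := ((((hx0.pow 2).add ((hx1.pow 2).const_mul (α - 1))).const_mul
    (α / 2 * m ^ (α - 2))).add (hcubic.const_mul δ))
  have hopen : IsOpen {x : E2 | vec2 0 m + (δ * l₀) • x ≠ 0} :=
    isOpen_ne.preimage (continuous_const.add (continuous_const_smul _))
  refine (hmodel.congr_of_eventuallyEq ?_).congr_fderiv ?_
  · filter_upwards [hopen.mem_nhds hw] with x hx
    exact Phi_eq_add_cubicRemainder α m δ l₀ hx
  · ext v
    simp only [PiLp.proj_apply, nsmul_eq_mul, Nat.cast_ofNat, add_apply, smul_apply,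
      smul_eq_mul, ContinuousLinearMap.comp_apply, ContinuousLinearMap.prod_apply,
      ContinuousLinearMap.id_apply]
    ring

theorem Xvec_eq (α m δ l₀ : ℝ) {η : E2} (hw : vec2 0 m + (δ * l₀) • η ≠ 0) :
    Xvec α m δ l₀ η =
      ![-(α * m ^ (α - 2) * η 0 + δ * fderiv ℝ (cubicRemainder α) (vec2 0 m + (δ * l₀) • η, η)
          ((δ * l₀) • EuclideanSpace.single 0 1, EuclideanSpace.single 0 1)),
        -(α * m ^ (α - 2) * (α - 1) * η 1 + δ * fderiv ℝ (cubicRemainder α)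
          (vec2 0 m + (δ * l₀) • η, η)
          ((δ * l₀) • EuclideanSpace.single 1 1, EuclideanSpace.single 1 1)), 1] := by
  exact (crossProduct_fderiv_graph (hasFDerivAt_Phi α m δ l₀ hw)).trans (by simp)

theorem exists_Xvec_eq {α M m δ l₀ : ℝ}
    (hM : ∀ w η : E2, 1 / 4 ≤ ‖w‖ → ‖w‖ ≤ 3 → ‖η‖ ≤ 1 →
      ‖fderiv ℝ (cubicRemainder α) (w, η)‖ ≤ M)
    (hm : m ∈ Set.Icc (1 / 2 : ℝ) 2) (hs : |δ * l₀| ≤ 1 / 4) {η : E2} (hη : η ∈ Om) :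
    ∃ r s : ℝ, |r| ≤ M ∧ |s| ≤ M ∧ Xvec α m δ l₀ η =
      ![-(α * m ^ (α - 2) * η 0 + δ * r), -(α * m ^ (α - 2) * (α - 1) * η 1 + δ * s), 1] := by
  obtain ⟨hw₁, hw₃⟩ := norm_vec2_add_smul_mem_Icc hm hs hη
  have hw : vec2 0 m + (δ * l₀) • η ≠ 0 := norm_pos_iff.mp (by linarith)
  have hD := hM _ _ hw₁ hw₃ (norm_le_one_of_mem_Om hη)
  have hs₁ : |δ * l₀| ≤ 1 := by linarith
  exact ⟨_, _, abs_apply_smul_single_le hD hs₁ 0, abs_apply_smul_single_le hD hs₁ 1,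
    Xvec_eq α m δ l₀ hw⟩

theorem abs_det_Xvec_ge {α M m δ l₀ : ℝ}
    (hM : ∀ w η : E2, 1 / 4 ≤ ‖w‖ → ‖w‖ ≤ 3 → ‖η‖ ≤ 1 →
      ‖fderiv ℝ (cubicRemainder α) (w, η)‖ ≤ M)
    (hα : 1 ≤ α) (hm : m ∈ Set.Icc (1 / 2 : ℝ) 2) (hδ : 0 ≤ δ) (hδ₁ : δ ≤ 1)
    (hs : |δ * l₀| ≤ 1 / 4) {η₁ η₂ η₃ : E2} (hη₁ : η₁ ∈ Om) (hη₂ : η₂ ∈ Om) (hη₃ : η₃ ∈ Om) :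
    α ^ 2 * (α - 1) * m ^ (2 * (α - 2)) *
        |Matrix.det !![1, 1, 1; η₁ 0, η₂ 0, η₃ 0; η₁ 1, η₂ 1, η₃ 1]| -
      δ * (8 * M * (α ^ 2 * m ^ (α - 2) + M)) ≤
      |Matrix.det (Matrix.of fun i j =>
        (![Xvec α m δ l₀ η₁, Xvec α m δ l₀ η₂, Xvec α m δ l₀ η₃]) j i)| := by
  obtain ⟨r₁, s₁, hr₁, hs₁, hX₁⟩ := exists_Xvec_eq hM hm hs hη₁
  obtain ⟨r₂, s₂, hr₂, hs₂, hX₂⟩ := exists_Xvec_eq hM hm hs hη₂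
  obtain ⟨r₃, s₃, hr₃, hs₃, hX₃⟩ := exists_Xvec_eq hM hm hs hη₃
  have hM₀ : 0 ≤ M := (abs_nonneg r₁).trans hr₁
  have hvec : ∀ {B a b c : ℝ}, 0 ≤ B → |a| ≤ B → |b| ≤ B → |c| ≤ B → ‖![a, b, c]‖ ≤ B :=
    fun hB ha hb hc => (pi_norm_le_iff_of_nonneg hB).mpr fun i => by fin_cases i <;> simpa
  have hcoord : ∀ i, ‖![η₁ i, η₂ i, η₃ i]‖ ≤ 1 := fun i =>
    hvec zero_le_one (abs_apply_le_one_of_mem_Om hη₁ i) (abs_apply_le_one_of_mem_Om hη₂ i)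
      (abs_apply_le_one_of_mem_Om hη₃ i)
  have ht : 0 < m ^ (α - 2) := Real.rpow_pos_of_pos (by linarith [hm.1]) _
  have hpert := abs_det_of_one_row_add_smul_ge (a := α * m ^ (α - 2))
    (b := α * m ^ (α - 2) * (α - 1)) (by positivity)
    (mul_nonneg (by positivity) (by linarith)) hδ hδ₁
    (hcoord 0) (hcoord 1)
    (hvec hM₀ hr₁ hr₂ hr₃) (hvec hM₀ hs₁ hs₂ hs₃)
  have hdetη : Matrix.det !![1, 1, 1; η₁ 0, η₂ 0, η₃ 0; η₁ 1, η₂ 1, η₃ 1] =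
      (Matrix.of ![1, ![η₁ 0, η₂ 0, η₃ 0], ![η₁ 1, η₂ 1, η₃ 1]]).det := by
    rw [det_of_one_row]
    simp only [Matrix.det_fin_three, Matrix.of_apply, Matrix.cons_val', Matrix.cons_val_zero,
      Matrix.cons_val_fin_one, Matrix.cons_val_one, one_mul, Matrix.cons_val]
    ring
  have hdetX : Matrix.det (Matrix.of fun i j =>
      (![Xvec α m δ l₀ η₁, Xvec α m δ l₀ η₂, Xvec α m δ l₀ η₃]) j i) =
      (Matrix.of ![1, (α * m ^ (α - 2)) • ![η₁ 0, η₂ 0, η₃ 0] + δ • ![r₁, r₂, r₃],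
        (α * m ^ (α - 2) * (α - 1)) • ![η₁ 1, η₂ 1, η₃ 1] + δ • ![s₁, s₂, s₃]]).det := by
    rw [hX₁, hX₂, hX₃, det_of_one_row]
    simp only [Matrix.cons_val', Matrix.cons_val_fin_one, Matrix.det_fin_three, Matrix.of_apply,
      Matrix.cons_val_zero, Matrix.cons_val_one, Matrix.cons_val, mul_one, Matrix.smul_cons,
      smul_eq_mul, Matrix.smul_empty, Pi.add_apply]
    ring
  have hpow : m ^ (2 * (α - 2)) = m ^ (α - 2) * m ^ (α - 2) := by
    rw [two_mul, Real.rpow_add (by linarith [hm.1])]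
  rw [hdetη, hdetX]
  convert hpert using 2
  · rw [hpow]; ring
  · ring

/-- Transversality: non-collinearity of `η^{(1)}, η^{(2)}, η^{(3)}` (quantified by the
determinant lower bound `C₀`) implies a quantitative lower bound on
`|det(X(η^{(1)}), X(η^{(2)}), X(η^{(3)}))|`. -/
theorem transversality_det_lower_bound (α C₀ : ℝ) (hα : 1 < α) (hC₀ : 0 < C₀) :
    ∃ K₀ : ℝ,
      ∀ K : ℝ, K₀ ≤ K → ∀ δ : ℝ, 0 < δ → δ ≤ 1 / K →
        ∀ m ∈ Set.Icc (1 / 2 : ℝ) 2, ∀ l₀ ∈ Set.Ioo (0 : ℝ) 1,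
          ∀ η₁ ∈ Om, ∀ η₂ ∈ Om, ∀ η₃ ∈ Om,
            C₀ ≤ |Matrix.det !![1, 1, 1; η₁ 0, η₂ 0, η₃ 0; η₁ 1, η₂ 1, η₃ 1]| →
            1 / 2 * α ^ 2 * (α - 1) * m ^ (2 * (α - 2)) * C₀ ≤
              |Matrix.det (Matrix.of fun i j =>
                (![Xvec α m δ l₀ η₁, Xvec α m δ l₀ η₂, Xvec α m δ l₀ η₃]) j i)| := by
  obtain ⟨M, hM₀, hM⟩ := exists_bound_fderiv_cubicRemainder α
  -- uniform in `m ∈ [1/2, 2]`: `E` bounds the error coefficient, `L` the main coefficient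
  set E := 8 * M * (α ^ 2 * 2 ^ |α - 2| + M)
  set L := α ^ 2 * (α - 1) * (2 ^ |2 * (α - 2)|)⁻¹
  have hα₁ : 0 ≤ α ^ 2 * (α - 1) := mul_nonneg (sq_nonneg α) (by linarith)
  have hL : 0 < L := mul_pos (mul_pos (by positivity) (by linarith)) (by positivity)
  refine ⟨max 4 (2 * E / (L * C₀)),
    fun K hK δ hδ hδK m hm l₀ hl₀ η₁ hη₁ η₂ hη₂ η₃ hη₃ hdet => ?_⟩
  have hK₀ : 0 < K := by linarith [le_max_left 4 (2 * E / (L * C₀))]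
  have hδ₄ : δ ≤ 1 / 4 :=
    hδK.trans (one_div_le_one_div_of_le (by norm_num) (le_of_max_le_left hK))
  have hs : |δ * l₀| ≤ 1 / 4 := by
    rw [abs_of_pos (mul_pos hδ hl₀.1)]; nlinarith [hl₀.2]
  have hδE : δ * E ≤ L * C₀ / 2 := by
    have hKE := (div_le_iff₀ (by positivity)).mp (le_of_max_le_right hK)
    linarith [mul_le_mul_of_nonneg_left hKE hδ.le,
      mul_le_mul_of_nonneg_right ((le_div_iff₀ hK₀).mp hδK) (mul_pos hL hC₀).le]
  have hcoef : L ≤ α ^ 2 * (α - 1) * m ^ (2 * (α - 2)) :=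
    mul_le_mul_of_nonneg_left (inv_two_rpow_abs_le_rpow hm _) hα₁
  have herr : 8 * M * (α ^ 2 * m ^ (α - 2) + M) ≤ E := by
    have := rpow_le_two_rpow_abs hm (α - 2)
    simp only [E]; gcongr
  have hmain := abs_det_Xvec_ge hM hα.le hm hδ.le (by linarith) hs hη₁ hη₂ hη₃
  linarith [mul_le_mul_of_nonneg_left hdet (hL.le.trans hcoef),
    mul_le_mul_of_nonneg_left herr hδ.le, mul_le_mul_of_nonneg_right hcoef hC₀.le]
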